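/- arXiv:1509.01437 — 2 statements merged into one kernel-verified Lean document; each statement's English description precedes it below -/
import Mathlib

section
/- For α ∈ (0,1] there exists P such that for all p ≥ P and all integers η ∈ [i_p, s_p), one has 2^{−(α+1)} ≤ ⌊i_p^α⌋ / η^α ≤ 1. In particular the interval length β(p) is comparable to |η|^α uniformly over η ∈ I_p, i.e. the partition is an α-covering. -/
open MeasureTheory Complex Real

noncomputable def iS (α : ℝ) : ℕ → ℕ × ℕ
  | 0 => (0, 1)
  | p + 1 => ((iS α p).2, (iS α p).2 + ⌊((iS α p).2 : ℝ) ^ α⌋₊)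

/-- `i_p`, the left endpoint of the `p`-th interval. -/
noncomputable def ip (α : ℝ) (p : ℕ) : ℕ := (iS α p).1
/-- `s_p`, the right endpoint of the `p`-th interval. -/
noncomputable def sp (α : ℝ) (p : ℕ) : ℕ := (iS α p).2
/-- `β(p) = s_p - i_p`, the width of the `p`-th interval. -/
noncomputable def βp (α : ℝ) (p : ℕ) : ℕ := sp α p - ip α p

/-- The α-DOST basis function `B_{p,τ}`. -/
noncomputable def B (α : ℝ) (p τ : ℕ) (t : ℝ) : ℂ :=
  ((βp α p : ℝ) ^ (-(1:ℝ)/2) : ℝ) *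
    ∑ η ∈ Finset.Ico (ip α p) (sp α p),
      Complex.exp (2 * π * Complex.I * η * (t - τ / (βp α p : ℝ)))

lemma one_le_sp (α : ℝ) (p : ℕ) : 1 ≤ sp α p := by
  induction p with
  | zero => rfl
  | succ p ih => exact ih.trans (Nat.le_add_right _ _)

lemma sp_succ (α : ℝ) (p : ℕ) :
    sp α (p + 1) = ip α (p + 1) + ⌊(ip α (p + 1) : ℝ) ^ α⌋₊ := rfl

lemma one_le_ip_succ (α : ℝ) (p : ℕ) : 1 ≤ ip α (p + 1) := one_le_sp α p

lemma add_floor_rpow_le_two_mul {α : ℝ} (hα : α ≤ 1) {i : ℕ} (hi : 1 ≤ i) :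
    i + ⌊(i : ℝ) ^ α⌋₊ ≤ 2 * i := by
  have : ⌊(i : ℝ) ^ α⌋₊ ≤ i :=
    Nat.floor_le_of_le (Real.rpow_le_self_of_one_le (by exact_mod_cast hi) hα)
  omega

lemma floor_rpow_div_rpow_le_one {α i η : ℝ} (hα : 0 ≤ α) (hi : 0 ≤ i) (hiη : i ≤ η) :
    (⌊i ^ α⌋₊ : ℝ) / η ^ α ≤ 1 :=
  div_le_one_of_le₀ ((Nat.floor_le (Real.rpow_nonneg hi α)).trans (Real.rpow_le_rpow hi hiη hα))
    (Real.rpow_nonneg (hi.trans hiη) α)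

lemma two_rpow_neg_le_floor_rpow_div_rpow {α i η : ℝ} (hα : 0 ≤ α) (hi : 1 ≤ i)
    (hiη : i ≤ η) (hη : η ≤ 2 * i) :
    (2 : ℝ) ^ (-(α + 1)) ≤ (⌊i ^ α⌋₊ : ℝ) / η ^ α := by
  have hiα : 1 ≤ i ^ α := Real.one_le_rpow hi hα
  have hηα : η ^ α ≤ 2 ^ α * i ^ α := by
    rw [← Real.mul_rpow zero_le_two (by linarith)]
    exact Real.rpow_le_rpow (by linarith) hη hα
  -- The floor keeps at least half of `i ^ α ≥ 1`, and `η ≤ 2 i` costs a factor `2 ^ α`.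
  calc (2 : ℝ) ^ (-(α + 1)) = (i ^ α / 2) / (2 ^ α * i ^ α) := by
        rw [Real.rpow_neg zero_le_two, Real.rpow_add two_pos, Real.rpow_one]
        field_simp
    _ ≤ (⌊i ^ α⌋₊ : ℝ) / η ^ α :=
        div_le_div₀ (Nat.cast_nonneg _) (Nat.div_two_lt_floor hiα).le
          (Real.rpow_pos_of_pos (by linarith) α) hηα

/-- the partition is an α-covering: `β(p) ≍ η^α` on `I_p`, eventually in `p`. -/
theorem alpha_covering (α : ℝ) (hα : α ∈ Set.Ioc (0:ℝ) 1) :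
    ∃ P : ℕ, ∀ p : ℕ, P ≤ p → ∀ η ∈ Finset.Ico (ip α p) (sp α p),
      (2:ℝ) ^ (-(α + 1)) ≤ (⌊((ip α p : ℝ)) ^ α⌋₊ : ℝ) / (η : ℝ) ^ α ∧
        (⌊((ip α p : ℝ)) ^ α⌋₊ : ℝ) / (η : ℝ) ^ α ≤ 1 := by
  obtain ⟨hα0, hα1⟩ := hα
  -- `p = 0` must be excluded: `I_0 = [0, 1)` contains `η = 0`, where `η ^ α = 0`.
  refine ⟨1, fun p hp η hη => ?_⟩
  obtain ⟨q, rfl⟩ : ∃ q, p = q + 1 := ⟨p - 1, by omega⟩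
  rw [Finset.mem_Ico, sp_succ] at hη
  have hi := one_le_ip_succ α q
  have hwidth := add_floor_rpow_le_two_mul hα1 hi
  have hiη : (ip α (q + 1) : ℝ) ≤ η := by exact_mod_cast hη.1
  have hη2i : (η : ℝ) ≤ 2 * ip α (q + 1) := by exact_mod_cast (by omega : η ≤ 2 * ip α (q + 1))
  exact ⟨two_rpow_neg_le_floor_rpow_div_rpow hα0.le (by exact_mod_cast hi) hiη hη2i,
    floor_rpow_div_rpow_le_one hα0.le (Nat.cast_nonneg _) hiη⟩
end

section
/- Let (φ, μ) be admissible with supp φ̂ ⊂ [−L,L], and suppose 0 < ν < (2L + μ)^{−1}. Then for every p and every k ∈ ℤ \ {0}, the supports of Φ_p(· − kβ(p)/ν) and Φ_p are disjoint; consequently Σ_{p∈ℤ} Σ_{k≠0} T_{kβ(p)/ν} f̂ · conj(Φ_p)(· − kβ(p)/ν) · Φ_p vanishes identically for all f. -/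
open MeasureTheory Complex Real FourierTransform

/-- The `ℤ`-indexed intervals of the α-partition: for `p < 0`, `I_p = -I_{-p}`. -/
noncomputable def IpZ (α : ℝ) (p : ℤ) : Finset ℤ :=
  if 0 ≤ p then Finset.Ico (ip α p.toNat : ℤ) (sp α p.toNat : ℤ)
  else Finset.image (fun n => -n) (Finset.Ico (ip α (-p).toNat : ℤ) (sp α (-p).toNat : ℤ))

/-- Width of the `ℤ`-indexed interval `I_p`. -/
noncomputable def βZ (α : ℝ) (p : ℤ) : ℕ := βp α p.natAbs

/-- The scaled interval `μ I_p` as a subset of `ℝ`. -/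
noncomputable def muIpZ (α μ : ℝ) (p : ℤ) : Set ℝ :=
  ↑(Finset.image (fun η : ℤ => μ * (η : ℝ)) (IpZ α p))

/-- `Φ_p(ω) = Σ_{η ∈ μ I_p} g(ω - η)`, where `g` plays the role of `φ̂`. -/
noncomputable def Φ (α μ : ℝ) (g : ℝ → ℂ) (p : ℤ) (ω : ℝ) : ℂ :=
  ∑ η ∈ IpZ α p, g (ω - μ * (η : ℝ))

/-- The α-DOST frame element `φ_{p,k}`. -/
noncomputable def dostEl (α μ ν : ℝ) (φ : ℝ → ℂ) (p k : ℤ) (t : ℝ) : ℂ :=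
  ((βZ α p : ℝ) ^ (-(1:ℝ)/2) : ℝ) *
    ∑ η ∈ IpZ α p,
      Complex.exp (2 * π * Complex.I * (μ * (η : ℝ)) * (t - (k : ℝ) * ν / (βZ α p : ℝ))) *
        φ (t - (k : ℝ) * ν / (βZ α p : ℝ))

/-!
`Φ_p` vanishes outside the `L`-neighbourhood of `μ I_p`, and `μ I_p` has diameter `μ (β(p) - 1)`.
So two points of the support of `Φ_p` are at most `2L + μ (β(p) - 1) < β(p) (2L + μ) < β(p) / ν`
apart, while a shift by `k β(p) / ν` with `k ≠ 0` moves a point by at least `β(p) / ν`. Hence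
`Φ_p(ω - k β(p) / ν) Φ_p(ω) = 0` for every `ω`, and each term of the off-diagonal sum vanishes.
-/

lemma ip_le_sp (α : ℝ) (p : ℕ) : ip α p ≤ sp α p := by
  cases p <;> simp [ip, sp, iS]

lemma abs_sub_lt_βZ {α : ℝ} {p η₁ η₂ : ℤ} (h₁ : η₁ ∈ IpZ α p) (h₂ : η₂ ∈ IpZ α p) :
    |η₁ - η₂| < βZ α p := by
  have hβ : (βZ α p : ℤ) = sp α p.natAbs - ip α p.natAbs := by
    simp [βZ, βp, Nat.cast_sub (ip_le_sp α _)]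
  rw [hβ, abs_lt]
  unfold IpZ at h₁ h₂
  split_ifs at h₁ h₂ with hp
  · have hnat : p.toNat = p.natAbs := by omega
    rw [hnat, Finset.mem_Ico] at h₁ h₂
    omega
  · obtain ⟨n₁, hn₁, rfl⟩ := Finset.mem_image.mp h₁
    obtain ⟨n₂, hn₂, rfl⟩ := Finset.mem_image.mp h₂
    have hnat : (-p).toNat = p.natAbs := by omega
    rw [hnat, Finset.mem_Ico] at hn₁ hn₂
    omega

lemma exists_mem_IpZ_of_Φ_ne_zero {α μ L : ℝ} {g : ℝ → ℂ}
    (hsupp : Function.support g ⊆ Set.Icc (-L) L) {p : ℤ} {x : ℝ} (hx : Φ α μ g p x ≠ 0) :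
    ∃ η ∈ IpZ α p, |x - μ * η| ≤ L := by
  obtain ⟨η, hη, hne⟩ := Finset.exists_ne_zero_of_sum_ne_zero hx
  exact ⟨η, hη, abs_le.mpr (hsupp hne)⟩

lemma two_mul_add_mul_sub_one_lt_abs_mul_div {L μ ν b : ℝ} {k : ℤ} (hL : 0 ≤ L) (hμ : 0 ≤ μ)
    (hν : 0 < ν) (hν' : ν < (2 * L + μ)⁻¹) (hb : 1 ≤ b) (hk : k ≠ 0) :
    2 * L + μ * (b - 1) < |k * b / ν| := by
  have hk1 : (1 : ℝ) ≤ |(k : ℝ)| := by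
    rw [← Int.cast_abs]; exact_mod_cast Int.one_le_abs hk
  have hνL : ν * (2 * L + μ) < 1 := by
    rwa [← lt_div_iff₀ (inv_pos.mp (hν.trans hν')), one_div]
  rw [abs_div, abs_mul, abs_of_pos hν, abs_of_pos (by linarith : 0 < b), lt_div_iff₀ hν]
  calc (2 * L + μ * (b - 1)) * ν ≤ b * (ν * (2 * L + μ)) := by
        nlinarith [mul_nonneg (mul_nonneg hL (sub_nonneg.2 hb)) hν.le, mul_nonneg hμ hν.le]
    _ < b := mul_lt_of_lt_one_right (by linarith) hνL
    _ ≤ |(k : ℝ)| * b := le_mul_of_one_le_left (by linarith) hk1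

theorem Φ_sub_eq_zero_or_Φ_eq_zero {α μ L ν : ℝ} {g : ℝ → ℂ}
    (hsupp : Function.support g ⊆ Set.Icc (-L) L) (hμ : 0 ≤ μ) (hν : 0 < ν)
    (hν' : ν < (2 * L + μ)⁻¹) (p : ℤ) {k : ℤ} (hk : k ≠ 0) (ω : ℝ) :
    Φ α μ g p (ω - k * βZ α p / ν) = 0 ∨ Φ α μ g p ω = 0 := by
  by_contra! h
  set T : ℝ := k * βZ α p / ν
  obtain ⟨η₁, hη₁, h₁⟩ := exists_mem_IpZ_of_Φ_ne_zero hsupp h.1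
  obtain ⟨η₂, hη₂, h₂⟩ := exists_mem_IpZ_of_Φ_ne_zero hsupp h.2
  have hspread : |(η₂ : ℝ) - η₁| + 1 ≤ βZ α p := by
    have := abs_sub_lt_βZ hη₂ hη₁
    rw [← Int.cast_sub, ← Int.cast_abs]
    exact_mod_cast this
  have hT : |T| ≤ 2 * L + μ * (βZ α p - 1) := by
    have hμη : |μ * ((η₂ : ℝ) - η₁)| ≤ μ * (βZ α p - 1) := by
      rw [abs_mul, abs_of_nonneg hμ]
      exact mul_le_mul_of_nonneg_left (by linarith) hμ
    rw [abs_le] at h₁ h₂ hμη ⊢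
    constructor <;> linarith
  exact (two_mul_add_mul_sub_one_lt_abs_mul_div ((abs_nonneg _).trans h₁) hμ hν hν'
    (by linarith [abs_nonneg ((η₂ : ℝ) - η₁)]) hk).not_ge hT

theorem offdiag_vanishes_general (α : ℝ) (φ : SchwartzMap ℝ ℂ)
    (L μ : ℝ) (hμ : 0 < μ)
    (hsupp : Function.support (𝓕 ⇑φ) ⊆ Set.Icc (-L) L)
    (ν : ℝ) (hν : 0 < ν) (hν' : ν < (2 * L + μ)⁻¹) :
    (∀ (p : ℤ) (k : ℤ), k ≠ 0 →
        Disjoint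
          (Function.support (fun ω : ℝ => Φ α μ (𝓕 ⇑φ) p (ω - (k : ℝ) * (βZ α p : ℝ) / ν)))
          (Function.support (Φ α μ (𝓕 ⇑φ) p))) ∧
      ∀ (f : ℝ → ℂ) (ω : ℝ),
        (∑' (p : ℤ) (k : {k : ℤ // k ≠ 0}),
          f (ω - ((k : ℤ) : ℝ) * (βZ α p : ℝ) / ν) *
            (starRingEnd ℂ) (Φ α μ (𝓕 ⇑φ) p (ω - ((k : ℤ) : ℝ) * (βZ α p : ℝ) / ν)) *
              Φ α μ (𝓕 ⇑φ) p ω) = 0 := by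
  have hzero := Φ_sub_eq_zero_or_Φ_eq_zero (α := α) hsupp hμ.le hν hν'
  refine ⟨fun p k hk => Set.disjoint_left.mpr fun ω h₁ h₂ => (hzero p hk ω).elim h₁ h₂,
    fun f ω => ?_⟩
  have hterm (p : ℤ) (k : {k : ℤ // k ≠ 0}) :
      f (ω - ((k : ℤ) : ℝ) * (βZ α p : ℝ) / ν) *
        (starRingEnd ℂ) (Φ α μ (𝓕 ⇑φ) p (ω - ((k : ℤ) : ℝ) * (βZ α p : ℝ) / ν)) *
          Φ α μ (𝓕 ⇑φ) p ω = 0 := by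
    rcases hzero p k.2 ω with h | h <;> simp [h]
  simp only [hterm, tsum_zero]

/-- for `0 < ν < (2L+μ)⁻¹` the translated supports of `Φ_p` are disjoint,
and the off-diagonal Walnut sum vanishes identically. -/
theorem offdiag_vanishes (α : ℝ) (hα : α ∈ Set.Icc (0:ℝ) 1) (φ : SchwartzMap ℝ ℂ)
    (L μ : ℝ) (hL : 0 < L) (hμ : 0 < μ)
    (hsupp : Function.support (𝓕 ⇑φ) ⊆ Set.Icc (-L) L)
    (hrange : ∀ ω : ℝ, ∃ r : ℝ, 𝓕 ⇑φ ω = (r : ℂ) ∧ 0 ≤ r ∧ r ≤ 1)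
    (ν : ℝ) (hν : 0 < ν) (hν' : ν < (2 * L + μ)⁻¹) :
    (∀ (p : ℤ) (k : ℤ), k ≠ 0 →
        Disjoint
          (Function.support (fun ω : ℝ => Φ α μ (𝓕 ⇑φ) p (ω - (k : ℝ) * (βZ α p : ℝ) / ν)))
          (Function.support (Φ α μ (𝓕 ⇑φ) p))) ∧
      ∀ (f : ℝ → ℂ) (ω : ℝ),
        (∑' (p : ℤ) (k : {k : ℤ // k ≠ 0}),
          f (ω - ((k : ℤ) : ℝ) * (βZ α p : ℝ) / ν) *
            (starRingEnd ℂ) (Φ α μ (𝓕 ⇑φ) p (ω - ((k : ℤ) : ℝ) * (βZ α p : ℝ) / ν)) *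
              Φ α μ (𝓕 ⇑φ) p ω) = 0 :=
  offdiag_vanishes_general α φ L μ hμ hsupp ν hν hν'
end
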